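/- arXiv:1405.3860 — 2 statements merged into one kernel-verified Lean document; each statement's English description precedes it below -/
import Mathlib

section
/- Consider a spatial spectrum access game on an arbitrary undirected interference graph with user-specific transmission gains h_n > 0, common channel data rates B_m > 0, and the asymptotic random backoff mechanism, so that player n's payoff under profile a is U_n(a) = h_n·θ_{a_n}·B_{a_n}·1/(1 + K_n^{a_n}(a)), where K_n^m(a) = |{i ∈ 𝒩_n : a_i = m}|. Then Φ(a) = −Σ_{n=1}^N (1 + (1/2)·K_n^{a_n}(a)) / (θ_{a_n}·B_{a_n}) is an ordinal potential for the game, and consequently the game has a pure Nash equilibrium. -/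
/-! With `w = θ B`, the potential is, up to the private term `-∑ₙ 1 / w(aₙ)`, minus half the
double sum `∑ₙ ∑_{j ∈ 𝒩ₙ} [aⱼ = aₙ] / w(aₙ)`. Its summand `[s = t] / w(s)` is symmetric in `s, t`, so
on an undirected graph a deviation of player `n` changes the double sum by twice the change of
`n`'s own inner sum. Hence `Φ` changes by `1/y - 1/x`, where `y` and `x` are `n`'s effective
rates `w / (1 + K)` before and after the deviation, while `Uₙ` changes by `hₙ (x - y)`: both
have the sign of `x - y`. A maximiser of `Φ` is then a pure Nash equilibrium. -/

open Finset Function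

lemma Real.sign_mul_of_pos {c : ℝ} (hc : 0 < c) (r : ℝ) : Real.sign (c * r) = Real.sign r := by
  rcases lt_trichotomy r 0 with hr | rfl | hr
  · rw [Real.sign_of_neg hr, Real.sign_of_neg (mul_neg_of_pos_of_neg hc hr)]
  · rw [mul_zero]
  · rw [Real.sign_of_pos hr, Real.sign_of_pos (mul_pos hc hr)]

lemma Real.pos_of_sign_eq_one {r : ℝ} (h : Real.sign r = 1) : 0 < r := by
  by_contra hr
  rcases (not_lt.1 hr).lt_or_eq with hr | rfl
  · rw [Real.sign_of_neg hr] at h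
    norm_num at h
  · rw [Real.sign_zero] at h
    norm_num at h

lemma Finset.sum_comp_update_sub {ι α β : Type*} [Fintype ι] [DecidableEq ι] [AddCommGroup β]
    (f : α → β) (a : ι → α) (n : ι) (m : α) :
    ∑ i, f (update a n m i) - ∑ i, f (a i) = f m - f (a n) := by
  rw [← sum_sub_distrib, sum_eq_single n (fun i _ hi => by rw [update_of_ne hi, sub_self])
    (by simp), update_self]

section Games

variable {ι α : Type*} [DecidableEq ι]

def IsOrdinalPotential (U : (ι → α) → ι → ℝ) (Φ : (ι → α) → ℝ) : Prop :=
  ∀ n a m, Real.sign (Φ (update a n m) - Φ a) = Real.sign (U (update a n m) n - U a n)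

def IsPureNashEquilibrium (U : (ι → α) → ι → ℝ) (a : ι → α) : Prop :=
  ∀ n m, U (update a n m) n ≤ U a n

theorem IsOrdinalPotential.isPureNashEquilibrium_of_forall_le {U : (ι → α) → ι → ℝ}
    {Φ : (ι → α) → ℝ} (hΦ : IsOrdinalPotential U Φ) {a : ι → α} (ha : ∀ b, Φ b ≤ Φ a) :
    IsPureNashEquilibrium U a := by
  intro n m
  by_contra! hlt
  have hsign : Real.sign (Φ (update a n m) - Φ a) = 1 := by
    rw [hΦ, Real.sign_of_pos (sub_pos.2 hlt)]
  linarith [Real.pos_of_sign_eq_one hsign, ha (update a n m)]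

theorem IsOrdinalPotential.exists_isPureNashEquilibrium [Finite ι] [Finite α] [Nonempty α]
    {U : (ι → α) → ι → ℝ} {Φ : (ι → α) → ℝ} (hΦ : IsOrdinalPotential U Φ) :
    ∃ a, IsPureNashEquilibrium U a :=
  let ⟨a, ha⟩ := Finite.exists_max Φ
  ⟨a, hΦ.isPureNashEquilibrium_of_forall_le ha⟩

end Games

section PairInteraction

variable {ι α : Type*} [Fintype ι] [DecidableEq ι]

def pairInteraction (𝒩 : ι → Finset ι) (g : α → α → ℝ) (a : ι → α) : ℝ :=
  ∑ i, ∑ j ∈ 𝒩 i, g (a i) (a j)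

lemma pairInteraction_update_sub {𝒩 : ι → Finset ι} (hself : ∀ n, n ∉ 𝒩 n)
    (hsym : ∀ i j, i ∈ 𝒩 j ↔ j ∈ 𝒩 i) {g : α → α → ℝ} (hg : ∀ s t, g s t = g t s)
    (a : ι → α) (n : ι) (m : α) :
    pairInteraction 𝒩 g (update a n m) - pairInteraction 𝒩 g a =
      2 * ∑ j ∈ 𝒩 n, (g m (a j) - g (a n) (a j)) := by
  set δ := fun j => g m (a j) - g (a n) (a j)
  have hterm : ∀ i, ∀ j ∈ 𝒩 i, g (update a n m i) (update a n m j) - g (a i) (a j) =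
      (if i = n then δ j else 0) + (if j = n then δ i else 0) := by
    intro i j hj
    by_cases hi : i = n
    · subst hi
      have hji : j ≠ i := fun h => hself i (h ▸ hj)
      simp [δ, hji]
    · by_cases hjn : j = n
      · subst hjn
        simp [δ, hi, hg]
      · simp [hi, hjn]
  have hfilter : ({i | n ∈ 𝒩 i} : Finset ι) = 𝒩 n := by
    ext i
    simp [hsym]
  unfold pairInteraction
  rw [← sum_sub_distrib]
  simp_rw [← sum_sub_distrib]
  rw [sum_congr rfl fun i _ => sum_congr rfl (hterm i)]
  simp [sum_add_distrib, ← sum_filter, hfilter, two_mul]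

end PairInteraction

noncomputable section Backoff

variable {ι α : Type*} [DecidableEq α] (𝒩 : ι → Finset ι) (w : α → ℝ)

def congestion (a : ι → α) (n : ι) (t : α) : ℕ := #{i ∈ 𝒩 n | a i = t}

def backoffPayoff (h : ι → ℝ) (a : ι → α) (n : ι) : ℝ :=
  h n * w (a n) / (1 + congestion 𝒩 a n (a n))

def backoffPotential [Fintype ι] (a : ι → α) : ℝ :=
  -∑ n, (1 + 1 / 2 * (congestion 𝒩 a n (a n) : ℝ)) / w (a n)

def collisionCost (s t : α) : ℝ := if t = s then (w s)⁻¹ else 0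

lemma collisionCost_comm (s t : α) : collisionCost w s t = collisionCost w t s := by
  by_cases hst : t = s
  · rw [hst]
  · simp [collisionCost, hst, Ne.symm hst]

variable {𝒩}

lemma sum_collisionCost (a : ι → α) (n : ι) (t : α) :
    ∑ j ∈ 𝒩 n, collisionCost w t (a j) = congestion 𝒩 a n t / w t := by
  simp [collisionCost, congestion, ← sum_filter, div_eq_mul_inv]

section Update

variable [DecidableEq ι] (hself : ∀ n, n ∉ 𝒩 n)
include hself

lemma congestion_update_self (a : ι → α) (n : ι) (m t : α) :
    congestion 𝒩 (update a n m) n t = congestion 𝒩 a n t := by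
  unfold congestion
  congr 1
  exact filter_congr fun i hi => by rw [update_of_ne (ne_of_mem_of_not_mem hi (hself n))]

lemma backoffPayoff_update_sub (h : ι → ℝ) (a : ι → α) (n : ι) (m : α) :
    backoffPayoff 𝒩 w h (update a n m) n - backoffPayoff 𝒩 w h a n =
      h n * (w m / (1 + congestion 𝒩 a n m) - w (a n) / (1 + congestion 𝒩 a n (a n))) := by
  rw [backoffPayoff, backoffPayoff, update_self, congestion_update_self hself]
  ring

end Update

variable [Fintype ι]

lemma backoffPotential_eq (a : ι → α) :
    backoffPotential 𝒩 w a = -∑ n, (w (a n))⁻¹ - 1 / 2 * pairInteraction 𝒩 (collisionCost w) a := by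
  simp only [backoffPotential, pairInteraction, sum_collisionCost, mul_sum]
  rw [neg_sub_left, ← sum_add_distrib]
  exact congrArg _ (sum_congr rfl fun n _ => by ring)

variable [DecidableEq ι] (hself : ∀ n, n ∉ 𝒩 n) (hsym : ∀ i j, i ∈ 𝒩 j ↔ j ∈ 𝒩 i)
include hself hsym

lemma backoffPotential_update_sub (a : ι → α) (n : ι) (m : α) :
    backoffPotential 𝒩 w (update a n m) - backoffPotential 𝒩 w a =
      (1 + congestion 𝒩 a n (a n)) / w (a n) - (1 + congestion 𝒩 a n m) / w m := by
  have hpair := pairInteraction_update_sub hself hsym (collisionCost_comm w) a n m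
  have hprivate := sum_comp_update_sub (fun t => (w t)⁻¹) a n m
  rw [sum_sub_distrib, sum_collisionCost, sum_collisionCost] at hpair
  rw [backoffPotential_eq, backoffPotential_eq]
  linear_combination (-1 : ℝ) * hprivate - 1 / 2 * hpair

theorem isOrdinalPotential_backoffPotential (hw : ∀ t, 0 < w t) {h : ι → ℝ} (hh : ∀ n, 0 < h n) :
    IsOrdinalPotential (backoffPayoff 𝒩 w h) (backoffPotential 𝒩 w) := by
  intro n a m
  rw [backoffPotential_update_sub w hself hsym, backoffPayoff_update_sub w hself]
  set x := w m / (1 + congestion 𝒩 a n m)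
  set y := w (a n) / (1 + congestion 𝒩 a n (a n))
  have hx : 0 < x := by have := hw m; positivity
  have hy : 0 < y := by have := hw (a n); positivity
  have hn := hh n
  calc Real.sign ((1 + congestion 𝒩 a n (a n)) / w (a n) - (1 + congestion 𝒩 a n m) / w m)
      = Real.sign (1 / y - 1 / x) := by simp only [x, y, one_div_div]
    _ = Real.sign ((h n * x * y)⁻¹ * (h n * (x - y))) := by
        congr 1
        field_simp
    _ = Real.sign (h n * (x - y)) := Real.sign_mul_of_pos (by positivity) _

end Backoff

/-- Asymptotic random backoff (equal channel sharing) on an arbitrary undirected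
interference graph: `Φ(a) = −Σₙ (1 + Kₙ/2)/(θ_{aₙ} B_{aₙ})` is an ordinal potential,
and the game has a pure Nash equilibrium. -/
theorem stmt_8 (N M : ℕ)
    (𝒩 : Fin (N + 1) → Finset (Fin (N + 1)))
    (hself : ∀ n, n ∉ 𝒩 n)
    -- undirected interference graph:
    (hsym : ∀ i j, i ∈ 𝒩 j ↔ j ∈ 𝒩 i)
    (θ : Fin (M + 1) → ℝ) (hθ : ∀ m, 0 < θ m ∧ θ m < 1)
    (B : Fin (M + 1) → ℝ) (hB : ∀ m, 0 < B m)
    (h : Fin (N + 1) → ℝ) (hh : ∀ n, 0 < h n)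
    -- number of interferers of player n choosing channel m:
    (K : Fin (N + 1) → Fin (M + 1) → (Fin (N + 1) → Fin (M + 1)) → ℕ)
    (hK : ∀ n m a, K n m a = ((𝒩 n).filter (fun i => a i = m)).card)
    (U : (Fin (N + 1) → Fin (M + 1)) → Fin (N + 1) → ℝ)
    (hU : ∀ a n, U a n = h n * θ (a n) * B (a n) * (1 / (1 + (K n (a n) a : ℝ))))
    (Φ : (Fin (N + 1) → Fin (M + 1)) → ℝ)
    (hΦ : ∀ a, Φ a = -∑ n, (1 + (1 / 2) * (K n (a n) a : ℝ)) / (θ (a n) * B (a n))) :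
    (∀ (n : Fin (N + 1)) (a : Fin (N + 1) → Fin (M + 1)) (m : Fin (M + 1)),
      Real.sign (Φ (Function.update a n m) - Φ a) =
        Real.sign (U (Function.update a n m) n - U a n)) ∧
    ∃ a : Fin (N + 1) → Fin (M + 1), ∀ (n : Fin (N + 1)) (m : Fin (M + 1)),
      U (Function.update a n m) n ≤ U a n := by
  obtain rfl : K = fun n t a => congestion 𝒩 a n t :=
    funext fun n => funext fun t => funext (hK n t)
  obtain rfl : U = backoffPayoff 𝒩 (fun m => θ m * B m) h := by
    funext a n
    rw [hU, backoffPayoff]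
    ring
  obtain rfl : Φ = backoffPotential 𝒩 (fun m => θ m * B m) := funext hΦ
  have hpot := isOrdinalPotential_backoffPotential _ hself hsym
    (fun m => mul_pos (hθ m).1 (hB m)) hh
  exact ⟨hpot, hpot.exists_isPureNashEquilibrium⟩
end

section
/- The Boltzmann (softmax) map with temperature γ is Lipschitz with constant γ in the maximum norm: for every γ > 0, every M ≥ 1, every pair of vectors P, P̂ ∈ ℝ^M, and every index m ∈ {1,…,M}, | exp(γ P_m)/Σ_{m'=1}^M exp(γ P_{m'}) − exp(γ P̂_m)/Σ_{m'=1}^M exp(γ P̂_{m'}) | ≤ γ·max_{1 ≤ m' ≤ M} |P_{m'} − P̂_{m'}|. -/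
/-!
The `m`-th softmax weight is the sigmoid of its log-odds `x m - log ∑_{k ≠ m} exp (x k)`.
Moving every coordinate by at most `δ` moves each of the two terms of the log-odds by at most `δ`,
and the sigmoid is `1/4`-Lipschitz because its derivative `σ (1 - σ)` is at most `1/4`.
Hence each softmax weight moves by at most `δ / 2`, and the temperature only rescales `δ`.
-/

open Real Finset

lemma Real.lipschitzWith_sigmoid : LipschitzWith 4⁻¹ sigmoid := by
  refine lipschitzWith_of_nnnorm_deriv_le differentiable_sigmoid fun x => ?_
  have hs := sigmoid_nonneg x
  have hs' := sigmoid_le_one x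
  rw [← NNReal.coe_le_coe, coe_nnnorm, deriv_sigmoid, norm_of_nonneg (by nlinarith)]
  push_cast
  nlinarith [sq_nonneg (sigmoid x - 2⁻¹)]

lemma Real.abs_sigmoid_sub_le (a b : ℝ) : |sigmoid a - sigmoid b| ≤ |a - b| / 4 := by
  have := lipschitzWith_sigmoid.dist_le_mul a b
  rw [dist_eq, dist_eq] at this
  push_cast at this
  linarith

section LogSumExp

variable {ι : Type*} {s : Finset ι} {x y : ι → ℝ} {δ : ℝ}

lemma log_sum_exp_le_add_log_sum_exp (hs : s.Nonempty) (h : ∀ k ∈ s, x k ≤ y k + δ) :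
    log (∑ k ∈ s, exp (x k)) ≤ δ + log (∑ k ∈ s, exp (y k)) := by
  have hsum : ∑ k ∈ s, exp (x k) ≤ exp δ * ∑ k ∈ s, exp (y k) := by
    rw [mul_sum]
    exact sum_le_sum fun k hk => by rw [← exp_add, exp_le_exp]; linarith [h k hk]
  have hpos : ∀ z : ι → ℝ, 0 < ∑ k ∈ s, exp (z k) := fun z => sum_pos (fun k _ => exp_pos _) hs
  calc log (∑ k ∈ s, exp (x k))
      ≤ log (exp δ * ∑ k ∈ s, exp (y k)) := log_le_log (hpos x) hsum
    _ = δ + log (∑ k ∈ s, exp (y k)) := by rw [log_mul (exp_pos δ).ne' (hpos y).ne', log_exp]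

lemma abs_log_sum_exp_sub_le (hs : s.Nonempty) (h : ∀ k ∈ s, |x k - y k| ≤ δ) :
    |log (∑ k ∈ s, exp (x k)) - log (∑ k ∈ s, exp (y k))| ≤ δ := by
  have hxy := log_sum_exp_le_add_log_sum_exp (x := x) (y := y) (δ := δ) hs
    fun k hk => by linarith [(abs_le.mp (h k hk)).2]
  have hyx := log_sum_exp_le_add_log_sum_exp (x := y) (y := x) (δ := δ) hs
    fun k hk => by linarith [(abs_le.mp (h k hk)).1]
  rw [abs_sub_le_iff]
  constructor <;> linarith

end LogSumExp

noncomputable def softmax {ι : Type*} [Fintype ι] (x : ι → ℝ) (m : ι) : ℝ :=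
  exp (x m) / ∑ k, exp (x k)

section Softmax

variable {ι : Type*} [Fintype ι] [DecidableEq ι]

lemma softmax_eq_sigmoid (x : ι → ℝ) {m : ι} (hm : ({m}ᶜ : Finset ι).Nonempty) :
    softmax x m = sigmoid (x m - log (∑ k ∈ {m}ᶜ, exp (x k))) := by
  have hR : 0 < ∑ k ∈ {m}ᶜ, exp (x k) := sum_pos (fun k _ => exp_pos _) hm
  rw [softmax, Fintype.sum_eq_add_sum_compl m, sigmoid_def, neg_sub, exp_sub, exp_log hR]
  field_simp

lemma softmax_eq_one (x : ι → ℝ) {m : ι} (hm : ({m}ᶜ : Finset ι) = ∅) : softmax x m = 1 := by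
  rw [softmax, Fintype.sum_eq_add_sum_compl m, hm, sum_empty, add_zero, div_self (exp_pos _).ne']

lemma abs_softmax_sub_softmax_le {x y : ι → ℝ} {δ : ℝ} (h : ∀ k, |x k - y k| ≤ δ) (m : ι) :
    |softmax x m - softmax y m| ≤ δ / 2 := by
  rcases ({m}ᶜ : Finset ι).eq_empty_or_nonempty with hm | hm
  · rw [softmax_eq_one x hm, softmax_eq_one y hm, sub_self, abs_zero]
    linarith [abs_nonneg (x m - y m), h m]
  have hlog := abs_log_sum_exp_sub_le hm fun k _ => h k
  rw [softmax_eq_sigmoid x hm, softmax_eq_sigmoid y hm]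
  set Lx := log (∑ k ∈ {m}ᶜ, exp (x k))
  set Ly := log (∑ k ∈ {m}ᶜ, exp (y k))
  calc _ ≤ |(x m - Lx) - (y m - Ly)| / 4 := abs_sigmoid_sub_le _ _
    _ = |(x m - y m) - (Lx - Ly)| / 4 := by rw [sub_sub_sub_comm]
    _ ≤ (|x m - y m| + |Lx - Ly|) / 4 := by gcongr; exact abs_sub _ _
    _ ≤ δ / 2 := by linarith [h m]

end Softmax

/-- The Boltzmann (softmax) map with temperature `γ` is `γ`-Lipschitz from the maximum
norm to each coordinate: for all vectors `P, P̂ ∈ ℝ^M` (`M ≥ 1`) and every index `m`,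
`|softmax(P)_m − softmax(P̂)_m| ≤ γ · max_{m'} |P_{m'} − P̂_{m'}|`. -/
theorem stmt_18 (γ : ℝ) (hγ : 0 < γ) (M : ℕ)
    (P Phat : Fin (M + 1) → ℝ) (m : Fin (M + 1)) :
    |Real.exp (γ * P m) / (∑ m', Real.exp (γ * P m')) -
        Real.exp (γ * Phat m) / (∑ m', Real.exp (γ * Phat m'))| ≤
      γ * Finset.univ.sup' Finset.univ_nonempty (fun m' => |P m' - Phat m'|) := by
  set D := Finset.univ.sup' Finset.univ_nonempty (fun m' => |P m' - Phat m'|)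
  have hscaled : ∀ k, |γ * P k - γ * Phat k| ≤ γ * D := fun k => by
    rw [← mul_sub, abs_mul, abs_of_pos hγ]
    exact mul_le_mul_of_nonneg_left (le_sup' (fun m' => |P m' - Phat m'|) (mem_univ k)) hγ.le
  have hD : 0 ≤ γ * D := (abs_nonneg _).trans (hscaled m)
  calc _ = |softmax (fun k => γ * P k) m - softmax (fun k => γ * Phat k) m| := rfl
    _ ≤ γ * D / 2 := abs_softmax_sub_softmax_le hscaled m
    _ ≤ γ * D := by linarith
end
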